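/- Let V : ℝ → ℝ be C¹ with |V(x)| ≤ C and |V'(x)| ≤ C(1+|x|)^δ for some δ ∈ (0,1). Let P_i^j = ∫_ℝ V h_i h_j dx with h_i the normalized Hermite functions. Then there is a constant C' such that for all i, j ≥ 1: |i-j|·|P_i^j| ≤ C'·(max(i,j))^{1/2}·(min(i,j))^{δ/2}. -/

import Mathlib

/-!
Write `h_i` for `hermiteFun i` and `D_i = h_i'`. Since `D_i' = (x² - (2i - 1)) h_i`, integrating
the derivative of `V (D_i h_j - h_i D_j)` gives the commutator identity
`2 (i - j) P_i^j = ∫ V' (D_i h_j - h_i D_j)`. The ladder relation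
`D_{n+1} = √(n/2) h_n - √((n+1)/2) h_{n+2}` turns the right side into four integrals
`∫ V' h_k h_l`, with coefficients at most `√max(i,j)` and `k` within `1` of `min(i,j)`.
Each of them is at most `C ‖(1 + |x|)^δ h_k‖ ‖h_l‖` by Cauchy–Schwarz (as a weighted AM-GM), and
`‖(1 + |x|)^δ h_k‖² ≲ k^δ` follows from the concavity of `t ↦ t^δ` and the second moment
`∫ x² h_{n+1}² = n + 1/2`, itself a consequence of the three-term recurrence and orthonormality.
-/

/-- The physicists' Hermite polynomials `H_n`. -/
noncomputable def physHermite : ℕ → ℝ → ℝ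
  | 0 => fun _ => 1
  | 1 => fun x => 2 * x
  | (n+2) => fun x => 2 * x * physHermite (n+1) x - 2 * ((n:ℝ)+1) * physHermite n x

/-- The `L²(ℝ)`-normalized Hermite functions `h_i`, `i ≥ 1`: the normalized
eigenfunctions of `-d²/dx² + x²` with eigenvalue `2i-1`, with the convention `h_0 = 0`. -/
noncomputable def hermiteFun (i : ℕ) (x : ℝ) : ℝ :=
  if i = 0 then 0
  else (Real.sqrt (2 ^ (i-1) * (Nat.factorial (i-1)) * Real.sqrt Real.pi))⁻¹ *
       physHermite (i-1) x * Real.exp (-x^2/2)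

open MeasureTheory Real
open scoped Nat

-- Here and below `n - 1` is truncated; at `n = 0` the term containing it has coefficient `0`.
theorem physHermite_succ (n : ℕ) (x : ℝ) :
    physHermite (n + 1) x = 2 * x * physHermite n x - 2 * n * physHermite (n - 1) x := by
  cases n with
  | zero => simp [physHermite]
  | succ n => simp [physHermite]

theorem hasDerivAt_physHermite :
    ∀ (n : ℕ) (x : ℝ), HasDerivAt (physHermite n) (2 * n * physHermite (n - 1) x) x
  | 0, x => by simpa [physHermite] using hasDerivAt_const x (1 : ℝ)
  | 1, x => by simpa [physHermite] using (hasDerivAt_id x).const_mul (2 : ℝ)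
  | n + 2, x => by
    have h := (((hasDerivAt_id' x).const_mul 2).fun_mul (hasDerivAt_physHermite (n + 1) x)).fun_sub
      ((hasDerivAt_physHermite n x).const_mul (2 * ((n : ℝ) + 1)))
    refine h.congr_deriv ?_
    have := physHermite_succ n x
    push_cast at this ⊢
    linear_combination -(2 * (n : ℝ) + 2) * this

theorem abs_physHermite_le :
    ∀ n : ℕ, ∃ B, 0 ≤ B ∧ ∀ x, |physHermite n x| ≤ B * (1 + x ^ 2) ^ n
  | 0 => ⟨1, zero_le_one, fun x => by simp [physHermite]⟩
  | 1 => ⟨2, zero_le_two, fun x => by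
      simp only [physHermite, abs_mul, abs_two, pow_one]
      nlinarith [sq_abs x, abs_nonneg x]⟩
  | n + 2 => by
    obtain ⟨B₁, hB₁, h₁⟩ := abs_physHermite_le (n + 1)
    obtain ⟨B₀, hB₀, h₀⟩ := abs_physHermite_le n
    refine ⟨2 * B₁ + 2 * (n + 1) * B₀, by positivity, fun x => ?_⟩
    have hx : |x| ≤ 1 + x ^ 2 := by nlinarith [sq_abs x, abs_nonneg x]
    have hpow : (1 + x ^ 2) ^ n ≤ (1 + x ^ 2) ^ (n + 2) :=
      pow_le_pow_right₀ (by nlinarith [sq_nonneg x]) (by omega)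
    calc |physHermite (n + 2) x|
        ≤ 2 * |x| * |physHermite (n + 1) x| + 2 * (n + 1) * |physHermite n x| := by
          simp only [physHermite]
          refine (abs_sub _ _).trans (le_of_eq ?_)
          rw [abs_mul, abs_mul, abs_mul, abs_two,
            abs_of_nonneg (by positivity : (0 : ℝ) ≤ 2 * (n + 1))]
      _ ≤ 2 * (1 + x ^ 2) * (B₁ * (1 + x ^ 2) ^ (n + 1))
          + 2 * (n + 1) * (B₀ * (1 + x ^ 2) ^ (n + 2)) := by
          gcongr
          · exact h₁ x
          · exact (h₀ x).trans (by gcongr)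
      _ = (2 * B₁ + 2 * (n + 1) * B₀) * (1 + x ^ 2) ^ (n + 2) := by ring

theorem one_add_sq_pow_le (n : ℕ) (x : ℝ) :
    (1 + x ^ 2) ^ n ≤ 4 ^ n * n ! * exp ((1 + x ^ 2) / 4) := by
  have h := pow_div_factorial_le_exp (x := (1 + x ^ 2) / 4) (by positivity) n
  rw [div_pow, div_div, div_le_iff₀ (by positivity)] at h
  linarith

noncomputable def hermiteConst (n : ℕ) : ℝ := (√(2 ^ n * n ! * √π))⁻¹

theorem hermiteFun_zero : hermiteFun 0 = 0 := by
  ext; simp [hermiteFun]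

theorem hermiteFun_succ (n : ℕ) (x : ℝ) :
    hermiteFun (n + 1) x = hermiteConst n * physHermite n x * exp (-x ^ 2 / 2) := by
  simp [hermiteFun, hermiteConst]

theorem hermiteConst_eq_mul_succ (n : ℕ) :
    hermiteConst n = 2 * √(((n : ℝ) + 1) / 2) * hermiteConst (n + 1) := by
  have h2 : 2 * √(((n : ℝ) + 1) / 2) = √(2 * ((n : ℝ) + 1)) := by
    rw [show 2 * ((n : ℝ) + 1) = 2 ^ 2 * (((n : ℝ) + 1) / 2) by ring, sqrt_mul (by norm_num),
      sqrt_sq zero_le_two]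
  have hne : √(2 * ((n : ℝ) + 1)) ≠ 0 := by positivity
  rw [h2, hermiteConst, hermiteConst, Nat.factorial_succ,
    show (2 : ℝ) ^ (n + 1) * ((n + 1) * n ! : ℕ) * √π = 2 * ((n : ℝ) + 1) * (2 ^ n * n ! * √π) by
      push_cast; ring,
    sqrt_mul (by positivity : (0 : ℝ) ≤ 2 * ((n : ℝ) + 1)), mul_inv, ← mul_assoc,
    mul_inv_cancel₀ hne, one_mul]

theorem sqrt_mul_hermiteFun (n : ℕ) (x : ℝ) :
    √((n : ℝ) / 2) * hermiteFun n x
      = n * hermiteConst n * physHermite (n - 1) x * exp (-x ^ 2 / 2) := by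
  cases n with
  | zero => simp
  | succ n =>
    have hs := sq_sqrt (show (0 : ℝ) ≤ ((n : ℝ) + 1) / 2 by positivity)
    rw [hermiteFun_succ, hermiteConst_eq_mul_succ n]
    push_cast
    linear_combination 2 * hermiteConst (n + 1) * physHermite n x * exp (-x ^ 2 / 2) * hs

theorem sqrt_mul_hermiteFun_add_two (n : ℕ) (x : ℝ) :
    √(((n : ℝ) + 1) / 2) * hermiteFun (n + 2) x
      = hermiteConst n / 2 * physHermite (n + 1) x * exp (-x ^ 2 / 2) := by
  rw [hermiteFun_succ, hermiteConst_eq_mul_succ n]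
  ring

theorem mul_hermiteFun_succ (n : ℕ) (x : ℝ) :
    x * hermiteFun (n + 1) x
      = √((n : ℝ) / 2) * hermiteFun n x + √(((n : ℝ) + 1) / 2) * hermiteFun (n + 2) x := by
  rw [sqrt_mul_hermiteFun, sqrt_mul_hermiteFun_add_two, hermiteFun_succ, physHermite_succ]
  ring

theorem hasDerivAt_hermiteFun_succ (n : ℕ) (x : ℝ) :
    HasDerivAt (hermiteFun (n + 1))
      (√((n : ℝ) / 2) * hermiteFun n x - √(((n : ℝ) + 1) / 2) * hermiteFun (n + 2) x) x := by
  have hexp : HasDerivAt (fun y => exp (-y ^ 2 / 2)) (-x * exp (-x ^ 2 / 2)) x := by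
    refine ((hasDerivAt_pow 2 x).fun_neg.div_const 2).exp.congr_deriv ?_
    ring
  have h := ((hasDerivAt_physHermite n x).fun_mul hexp).const_mul (hermiteConst n)
  rw [show hermiteFun (n + 1) = fun y => hermiteConst n * (physHermite n y * exp (-y ^ 2 / 2)) by
    ext y; rw [hermiteFun_succ, mul_assoc]]
  refine h.congr_deriv ?_
  rw [sqrt_mul_hermiteFun, sqrt_mul_hermiteFun_add_two, physHermite_succ]
  ring

theorem hasDerivAt_hermiteFun (k : ℕ) (x : ℝ) :
    HasDerivAt (hermiteFun k)
      (x * hermiteFun k x - 2 * √((k : ℝ) / 2) * hermiteFun (k + 1) x) x := by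
  cases k with
  | zero => simp [hermiteFun_zero]
  | succ n =>
    refine (hasDerivAt_hermiteFun_succ n x).congr_deriv ?_
    rw [mul_hermiteFun_succ]
    push_cast
    ring

theorem deriv_hermiteFun_succ (n : ℕ) :
    deriv (hermiteFun (n + 1)) = fun x =>
      √((n : ℝ) / 2) * hermiteFun n x - √(((n : ℝ) + 1) / 2) * hermiteFun (n + 2) x :=
  funext fun x => (hasDerivAt_hermiteFun_succ n x).deriv

theorem hasDerivAt_deriv_hermiteFun (i : ℕ) (x : ℝ) :
    HasDerivAt (deriv (hermiteFun i)) ((x ^ 2 - (2 * i - 1)) * hermiteFun i x) x := by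
  cases i with
  | zero => simp [hermiteFun_zero]
  | succ n =>
    rw [deriv_hermiteFun_succ]
    have h := ((hasDerivAt_hermiteFun n x).const_mul (√((n : ℝ) / 2))).fun_sub
      ((hasDerivAt_hermiteFun_succ (n + 1) x).const_mul (√(((n : ℝ) + 1) / 2)))
    refine h.congr_deriv ?_
    have e₁ := mul_hermiteFun_succ n x
    have e₂ := mul_hermiteFun_succ (n + 1) x
    have s₁ := sq_sqrt (show (0 : ℝ) ≤ (n : ℝ) / 2 by positivity)
    have s₂ := sq_sqrt (show (0 : ℝ) ≤ ((n : ℝ) + 1) / 2 by positivity)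
    push_cast at e₂ ⊢
    linear_combination (-x) * e₁ - √(((n : ℝ) + 1) / 2) * e₂
      - 2 * hermiteFun (n + 1) x * s₁ - 2 * hermiteFun (n + 1) x * s₂

theorem continuous_hermiteFun (i : ℕ) : Continuous (hermiteFun i) :=
  continuous_iff_continuousAt.2 fun x => (hasDerivAt_hermiteFun i x).continuousAt

theorem continuous_deriv_hermiteFun (i : ℕ) : Continuous (deriv (hermiteFun i)) :=
  continuous_iff_continuousAt.2 fun x => (hasDerivAt_deriv_hermiteFun i x).continuousAt

def HasGaussianDecay (f : ℝ → ℝ) : Prop :=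
  Continuous f ∧ ∃ B, ∀ x, |f x| ≤ B * exp (-x ^ 2 / 4)

namespace HasGaussianDecay

variable {f g : ℝ → ℝ}

theorem const_mul (hf : HasGaussianDecay f) (c : ℝ) : HasGaussianDecay fun x => c * f x := by
  obtain ⟨hc, B, hB⟩ := hf
  refine ⟨continuous_const.mul hc, |c| * B, fun x => ?_⟩
  rw [abs_mul, mul_assoc]
  exact mul_le_mul_of_nonneg_left (hB x) (abs_nonneg c)

theorem sub (hf : HasGaussianDecay f) (hg : HasGaussianDecay g) :
    HasGaussianDecay fun x => f x - g x := by
  obtain ⟨hcf, B, hB⟩ := hf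
  obtain ⟨hcg, B', hB'⟩ := hg
  refine ⟨hcf.sub hcg, B + B', fun x => (abs_sub _ _).trans ?_⟩
  rw [add_mul]
  exact add_le_add (hB x) (hB' x)

theorem integrable_mul_mul {u : ℝ → ℝ} {A : ℝ} (hu : Continuous u)
    (huA : ∀ x, |u x| ≤ A * (1 + x ^ 2)) (hf : HasGaussianDecay f) (hg : HasGaussianDecay g) :
    Integrable fun x => u x * f x * g x := by
  obtain ⟨hcf, B, hB⟩ := hf
  obtain ⟨hcg, B', hB'⟩ := hg
  have hint : Integrable fun x : ℝ => (1 + x ^ 2) * exp (-(1 / 2) * x ^ 2) := by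
    have h := integrable_rpow_mul_exp_neg_mul_sq (b := 1 / 2) (by norm_num) (s := 2) (by norm_num)
    simp only [rpow_two] at h
    exact ((integrable_exp_neg_mul_sq (b := 1 / 2) (by norm_num)).add h).congr
      (ae_of_all _ fun x => by simp only [Pi.add_apply]; ring)
  refine (hint.const_mul (A * B * B')).mono' ((hu.mul hcf).mul hcg).aestronglyMeasurable
    (ae_of_all _ fun x => ?_)
  have hexp : exp (-x ^ 2 / 4) * exp (-x ^ 2 / 4) = exp (-(1 / 2) * x ^ 2) := by
    rw [← exp_add]; ring_nf
  have hA := (abs_nonneg _).trans (huA x)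
  have hB₀ := (abs_nonneg _).trans (hB x)
  rw [norm_eq_abs, abs_mul, abs_mul]
  calc |u x| * |f x| * |g x|
      ≤ A * (1 + x ^ 2) * (B * exp (-x ^ 2 / 4)) * (B' * exp (-x ^ 2 / 4)) :=
        mul_le_mul (mul_le_mul (huA x) (hB x) (abs_nonneg _) hA) (hB' x) (abs_nonneg _)
          (mul_nonneg hA hB₀)
    _ = A * B * B' * ((1 + x ^ 2) * exp (-(1 / 2) * x ^ 2)) := by
        rw [← hexp]; ring

theorem integrable_mul (hf : HasGaussianDecay f) (hg : HasGaussianDecay g) :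
    Integrable fun x => f x * g x := by
  have h := integrable_mul_mul (u := fun _ => 1) (A := 1) continuous_const
    (fun x => by rw [abs_one, one_mul]; nlinarith [sq_nonneg x]) hf hg
  simpa only [one_mul] using h

end HasGaussianDecay

theorem hasGaussianDecay_hermiteFun (i : ℕ) : HasGaussianDecay (hermiteFun i) := by
  refine ⟨continuous_hermiteFun i, ?_⟩
  cases i with
  | zero => exact ⟨0, fun x => by simp [hermiteFun_zero]⟩
  | succ n =>
    obtain ⟨B, hB, hH⟩ := abs_physHermite_le n
    refine ⟨|hermiteConst n| * B * 4 ^ n * n ! * exp (1 / 4), fun x => ?_⟩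
    have hexp : exp ((1 + x ^ 2) / 4) * exp (-x ^ 2 / 2) = exp (1 / 4) * exp (-x ^ 2 / 4) := by
      rw [← exp_add, ← exp_add]; ring_nf
    rw [hermiteFun_succ, abs_mul, abs_mul, abs_exp]
    calc |hermiteConst n| * |physHermite n x| * exp (-x ^ 2 / 2)
        ≤ |hermiteConst n| * (B * (4 ^ n * n ! * exp ((1 + x ^ 2) / 4))) * exp (-x ^ 2 / 2) := by
          gcongr
          exact (hH x).trans (mul_le_mul_of_nonneg_left (one_add_sq_pow_le n x) hB)
      _ = |hermiteConst n| * B * 4 ^ n * n ! * exp (1 / 4) * exp (-x ^ 2 / 4) := by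
          linear_combination (|hermiteConst n| * B * 4 ^ n * n !) * hexp

theorem hasGaussianDecay_deriv_hermiteFun (i : ℕ) : HasGaussianDecay (deriv (hermiteFun i)) := by
  cases i with
  | zero =>
    exact ⟨by simp [hermiteFun_zero, continuous_zero], 0, fun x => by simp [hermiteFun_zero]⟩
  | succ n =>
    rw [deriv_hermiteFun_succ]
    exact ((hasGaussianDecay_hermiteFun n).const_mul _).sub
      ((hasGaussianDecay_hermiteFun (n + 2)).const_mul _)

theorem integrable_hermiteFun_mul (i j : ℕ) :
    Integrable fun x => hermiteFun i x * hermiteFun j x :=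
  (hasGaussianDecay_hermiteFun i).integrable_mul (hasGaussianDecay_hermiteFun j)

theorem integrable_hermiteFun_sq (i : ℕ) : Integrable fun x => hermiteFun i x ^ 2 := by
  simpa only [sq] using integrable_hermiteFun_mul i i

theorem integral_commutator_hermiteFun {V V' : ℝ → ℝ} {A : ℝ} (hV : ∀ x, HasDerivAt V (V' x) x)
    (hV' : Continuous V') (hVA : ∀ x, |V x| ≤ A * (1 + x ^ 2))
    (hV'A : ∀ x, |V' x| ≤ A * (1 + x ^ 2)) (i j : ℕ) :
    2 * ((i : ℝ) - j) * ∫ x, V x * hermiteFun i x * hermiteFun j x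
      = ∫ x, V' x * (deriv (hermiteFun i) x * hermiteFun j x
          - hermiteFun i x * deriv (hermiteFun j) x) := by
  set W := fun x =>
    deriv (hermiteFun i) x * hermiteFun j x - hermiteFun i x * deriv (hermiteFun j) x
  have hVc : Continuous V := continuous_iff_continuousAt.2 fun x => (hV x).continuousAt
  have hi := hasGaussianDecay_hermiteFun i
  have hj := hasGaussianDecay_hermiteFun j
  have hi' := hasGaussianDecay_deriv_hermiteFun i
  have hj' := hasGaussianDecay_deriv_hermiteFun j
  have hW : ∀ {u : ℝ → ℝ}, Continuous u → (∀ x, |u x| ≤ A * (1 + x ^ 2)) →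
      Integrable fun x => u x * W x := fun hu huA =>
    ((hi'.integrable_mul_mul hu huA hj).sub (hi.integrable_mul_mul hu huA hj')).congr
      (ae_of_all _ fun x => by simp only [W, Pi.sub_apply]; ring)
  have hderiv (k : ℕ) (x : ℝ) : HasDerivAt (hermiteFun k) (deriv (hermiteFun k) x) x :=
    (hasDerivAt_hermiteFun k x).differentiableAt.hasDerivAt
  -- the second-order terms cancel since `h_k'' = (x² - (2k - 1)) h_k`
  have hVW (x : ℝ) : HasDerivAt (fun y => V y * W y)
      (V' x * W x + 2 * ((j : ℝ) - i) * (V x * hermiteFun i x * hermiteFun j x)) x := by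
    have h := (hV x).fun_mul (((hasDerivAt_deriv_hermiteFun i x).fun_mul (hderiv j x)).fun_sub
      ((hderiv i x).fun_mul (hasDerivAt_deriv_hermiteFun j x)))
    refine h.congr_deriv ?_
    simp only [W]
    ring
  have h := integral_eq_zero_of_hasDerivAt_of_integrable hVW
    ((hW hV' hV'A).add ((hi.integrable_mul_mul hVc hVA hj).const_mul _)) (hW hVc hVA)
  rw [integral_add (hW hV' hV'A) ((hi.integrable_mul_mul hVc hVA hj).const_mul _),
    integral_const_mul] at h
  linarith

theorem integral_hermiteFun_mul_hermiteFun {i j : ℕ} (hij : i ≠ j) :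
    ∫ x, hermiteFun i x * hermiteFun j x = 0 := by
  have h := integral_commutator_hermiteFun (V := fun _ => 1) (V' := fun _ => 0) (A := 1)
    (fun x => hasDerivAt_const x 1) continuous_const
    (fun x => by rw [abs_one, one_mul]; nlinarith [sq_nonneg x])
    (fun x => by rw [abs_zero, one_mul]; positivity) i j
  simp only [one_mul, zero_mul, integral_zero] at h
  have hne : 2 * ((i : ℝ) - j) ≠ 0 :=
    mul_ne_zero two_ne_zero (sub_ne_zero.2 (Nat.cast_injective.ne hij))
  exact (mul_eq_zero.1 h).resolve_left hne

theorem integral_mul_hermiteFun_succ_mul (n j : ℕ) :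
    ∫ x, x * hermiteFun (n + 1) x * hermiteFun j x
      = √((n : ℝ) / 2) * (∫ x, hermiteFun n x * hermiteFun j x)
        + √(((n : ℝ) + 1) / 2) * ∫ x, hermiteFun (n + 2) x * hermiteFun j x := by
  simp_rw [mul_hermiteFun_succ, add_mul, mul_assoc]
  rw [integral_add ((integrable_hermiteFun_mul n j).const_mul _)
    ((integrable_hermiteFun_mul (n + 2) j).const_mul _), integral_const_mul, integral_const_mul]

theorem integral_hermiteFun_succ_sq (n : ℕ) : ∫ x, hermiteFun (n + 1) x ^ 2 = 1 := by
  induction n with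
  | zero =>
    have hc : hermiteConst 0 ^ 2 = (√π)⁻¹ := by
      simp [hermiteConst, inv_pow, sq_sqrt (sqrt_nonneg π)]
    have h (x : ℝ) : hermiteFun 1 x ^ 2 = hermiteConst 0 ^ 2 * exp (-1 * x ^ 2) := by
      rw [hermiteFun_succ, mul_pow, mul_pow, ← exp_nat_mul]
      simp only [physHermite]
      ring_nf
    simp_rw [h]
    rw [integral_const_mul, integral_gaussian, div_one, hc, inv_mul_cancel₀ (by positivity)]
  | succ n ih =>
    -- `√((n+1)/2) ∫ h_{n+2}²` and `√((n+1)/2) ∫ h_{n+1}²` both equal `∫ x h_{n+1} h_{n+2}`: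
    -- expand `x h_{n+1}`, resp. `x h_{n+2}`, by the recurrence and use orthogonality
    have e₁ := integral_mul_hermiteFun_succ_mul n (n + 2)
    have e₂ := integral_mul_hermiteFun_succ_mul (n + 1) (n + 1)
    rw [integral_hermiteFun_mul_hermiteFun (i := n) (by omega), mul_zero, zero_add] at e₁
    rw [integral_hermiteFun_mul_hermiteFun (i := n + 1 + 2) (by omega), mul_zero, add_zero] at e₂
    have hswap : ∫ x, x * hermiteFun (n + 1) x * hermiteFun (n + 2) x
        = ∫ x, x * hermiteFun (n + 1 + 1) x * hermiteFun (n + 1) x :=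
      integral_congr_ae (ae_of_all _ fun x => by ring)
    simp only [← sq] at e₁ e₂
    rw [hswap, e₂, ih] at e₁
    push_cast at e₁
    have hpos : 0 < √(((n : ℝ) + 1) / 2) := by positivity
    exact mul_left_cancel₀ hpos.ne' e₁.symm

theorem integrable_mul_hermiteFun_sq {u : ℝ → ℝ} {A : ℝ} (hu : Continuous u)
    (huA : ∀ x, |u x| ≤ A * (1 + x ^ 2)) (i : ℕ) :
    Integrable fun x => u x * hermiteFun i x ^ 2 := by
  simpa only [mul_assoc, ← sq] using
    (hasGaussianDecay_hermiteFun i).integrable_mul_mul hu huA (hasGaussianDecay_hermiteFun i)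

theorem integral_hermiteFun_sq_le_one (i : ℕ) : ∫ x, hermiteFun i x ^ 2 ≤ 1 := by
  cases i with
  | zero => simp [hermiteFun_zero]
  | succ n => exact (integral_hermiteFun_succ_sq n).le

theorem integral_sq_mul_hermiteFun_succ_sq (n : ℕ) :
    ∫ x, x ^ 2 * hermiteFun (n + 1) x ^ 2 = n + 1 / 2 := by
  have h (x : ℝ) : x ^ 2 * hermiteFun (n + 1) x ^ 2
      = √((n : ℝ) / 2) ^ 2 * hermiteFun n x ^ 2
        + (2 * √((n : ℝ) / 2) * √(((n : ℝ) + 1) / 2) * (hermiteFun n x * hermiteFun (n + 2) x)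
          + √(((n : ℝ) + 1) / 2) ^ 2 * hermiteFun (n + 2) x ^ 2) := by
    rw [← mul_pow, mul_hermiteFun_succ]
    ring
  have hn : √((n : ℝ) / 2) ^ 2 * ∫ x, hermiteFun n x ^ 2 = n / 2 := by
    cases n with
    | zero => simp
    | succ m => rw [integral_hermiteFun_succ_sq, mul_one, sq_sqrt (by positivity)]
  simp_rw [h]
  rw [integral_add ((integrable_hermiteFun_sq n).const_mul _)
      (((integrable_hermiteFun_mul n (n + 2)).const_mul _).fun_add
        ((integrable_hermiteFun_sq (n + 2)).const_mul _)),
    integral_add ((integrable_hermiteFun_mul n (n + 2)).const_mul _)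
      ((integrable_hermiteFun_sq (n + 2)).const_mul _),
    integral_const_mul, integral_const_mul, integral_const_mul, hn,
    integral_hermiteFun_mul_hermiteFun (by omega), integral_hermiteFun_succ_sq (n + 1),
    sq_sqrt (by positivity)]
  ring

theorem rpow_le_rpow_add_rpow_sub_one_mul {δ u S : ℝ} (hδ₀ : 0 ≤ δ) (hδ₁ : δ ≤ 1) (hu : 0 ≤ u)
    (hS : 0 < S) : u ^ δ ≤ S ^ δ + S ^ (δ - 1) * u := by
  rcases le_or_gt u S with h | h
  · have := rpow_le_rpow hu h hδ₀
    have : 0 ≤ S ^ (δ - 1) * u := by positivity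
    linarith
  · have hu₀ : 0 < u := hS.trans h
    have h₁ : u ^ δ = u ^ (δ - 1) * u := by rw [rpow_sub_one hu₀.ne', div_mul_cancel₀ _ hu₀.ne']
    have h₂ : u ^ (δ - 1) ≤ S ^ (δ - 1) := rpow_le_rpow_of_nonpos hS h.le (by linarith)
    have := mul_le_mul_of_nonneg_right h₂ hu₀.le
    have : 0 ≤ S ^ δ := by positivity
    linarith

theorem one_add_abs_rpow_le {p : ℝ} (hp : p ≤ 2) (x : ℝ) : (1 + |x|) ^ p ≤ 2 * (1 + x ^ 2) :=
  calc (1 + |x|) ^ p ≤ (1 + |x|) ^ (2 : ℝ) :=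
        rpow_le_rpow_of_exponent_le (by linarith [abs_nonneg x]) hp
    _ ≤ 2 * (1 + x ^ 2) := by
        rw [rpow_two]; nlinarith [sq_abs x, abs_nonneg x, sq_nonneg (|x| - 1)]

theorem integral_weight_mul_hermiteFun_sq_le {δ : ℝ} (hδ₀ : 0 ≤ δ) (hδ₁ : δ ≤ 1) (i : ℕ) :
    ∫ x, (1 + |x|) ^ (2 * δ) * hermiteFun i x ^ 2 ≤ 4 * (i : ℝ) ^ δ := by
  cases i with
  | zero => simp [hermiteFun_zero]; positivity
  | succ n =>
    have hS : (0 : ℝ) < n + 1 := by positivity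
    have hpt (x : ℝ) : (1 + |x|) ^ (2 * δ) * hermiteFun (n + 1) x ^ 2
        ≤ ((n : ℝ) + 1) ^ δ * hermiteFun (n + 1) x ^ 2 + 2 * ((n : ℝ) + 1) ^ (δ - 1)
          * (hermiteFun (n + 1) x ^ 2 + x ^ 2 * hermiteFun (n + 1) x ^ 2) := by
      have h₁ : (1 + |x|) ^ (2 * δ) = ((1 + |x|) ^ 2) ^ δ := by
        rw [rpow_mul (by positivity) 2 δ, rpow_two]
      have h₂ := rpow_le_rpow_add_rpow_sub_one_mul hδ₀ hδ₁ (sq_nonneg (1 + |x|)) hS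
      have h₃ : (1 + |x|) ^ 2 ≤ 2 * (1 + x ^ 2) := by
        simpa only [rpow_two] using one_add_abs_rpow_le (le_refl 2) x
      have h₄ : 0 ≤ ((n : ℝ) + 1) ^ (δ - 1) := by positivity
      rw [h₁]
      nlinarith [mul_le_mul_of_nonneg_left h₃ h₄, sq_nonneg (hermiteFun (n + 1) x)]
    have hx₂ := integrable_mul_hermiteFun_sq (u := fun x => x ^ 2) (A := 1) (by fun_prop)
      (fun x => by rw [abs_of_nonneg (sq_nonneg x)]; linarith) (n + 1)
    have hint := ((integrable_hermiteFun_sq (n + 1)).const_mul (((n : ℝ) + 1) ^ δ)).fun_add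
      (((integrable_hermiteFun_sq (n + 1)).fun_add hx₂).const_mul (2 * ((n : ℝ) + 1) ^ (δ - 1)))
    calc ∫ x, (1 + |x|) ^ (2 * δ) * hermiteFun (n + 1) x ^ 2
        ≤ ((n : ℝ) + 1) ^ δ + 2 * ((n : ℝ) + 1) ^ (δ - 1) * (1 + (n + 1 / 2)) := by
          refine (integral_mono_of_nonneg (ae_of_all _ fun x => by positivity) hint
            (ae_of_all _ hpt)).trans_eq ?_
          rw [integral_add ((integrable_hermiteFun_sq (n + 1)).const_mul _)
              (((integrable_hermiteFun_sq (n + 1)).fun_add hx₂).const_mul _),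
            integral_const_mul, integral_const_mul, integral_add (integrable_hermiteFun_sq _) hx₂,
            integral_hermiteFun_succ_sq, integral_sq_mul_hermiteFun_succ_sq, mul_one]
      _ ≤ 4 * (((n + 1 : ℕ) : ℝ)) ^ δ := by
          have h₁ : ((n : ℝ) + 1) ^ δ / (n + 1) ≤ ((n : ℝ) + 1) ^ δ :=
            div_le_self (by positivity) (by linarith [(n.cast_nonneg : (0 : ℝ) ≤ n)])
          have h₂ : 2 * (((n : ℝ) + 1) ^ δ / (n + 1)) * (1 + (n + 1 / 2))
              = 2 * ((n : ℝ) + 1) ^ δ + ((n : ℝ) + 1) ^ δ / (n + 1) := by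
            field_simp; ring
          rw [rpow_sub_one hS.ne', h₂]
          push_cast
          linarith

theorem abs_integral_mul_hermiteFun_mul_le {δ C : ℝ} (hδ₀ : 0 ≤ δ) (hδ₁ : δ ≤ 1) (hC : 0 ≤ C)
    {U : ℝ → ℝ} (hU : ∀ x, |U x| ≤ C * (1 + |x|) ^ δ) (k l : ℕ) :
    |∫ x, U x * hermiteFun k x * hermiteFun l x| ≤ 5 / 2 * C * ((k : ℝ) + 1) ^ (δ / 2) := by
  set R := ((k : ℝ) + 1) ^ (δ / 2)
  have hR : 0 < R := by positivity
  have hR2 : R ^ 2 = ((k : ℝ) + 1) ^ δ := by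
    rw [← rpow_natCast, ← rpow_mul (by positivity)]; ring_nf
  have hw (x : ℝ) : ((1 + |x|) ^ δ) ^ 2 = (1 + |x|) ^ (2 * δ) := by
    rw [← rpow_natCast, ← rpow_mul (by positivity)]; ring_nf
  -- weighted AM-GM: `2ab ≤ a²/R + R b²` with `a = (1+|x|)^δ |h_k|` and `b = |h_l|`
  have hpt (x : ℝ) : ‖U x * hermiteFun k x * hermiteFun l x‖
      ≤ C / (2 * R) * ((1 + |x|) ^ (2 * δ) * hermiteFun k x ^ 2 + R ^ 2 * hermiteFun l x ^ 2) := by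
    have h := two_mul_le_add_sq ((1 + |x|) ^ δ * |hermiteFun k x|) (R * |hermiteFun l x|)
    rw [mul_pow, mul_pow, hw, sq_abs, sq_abs] at h
    rw [norm_eq_abs, abs_mul, abs_mul, div_mul_eq_mul_div, le_div_iff₀ (by positivity)]
    calc |U x| * |hermiteFun k x| * |hermiteFun l x| * (2 * R)
        ≤ C * (1 + |x|) ^ δ * |hermiteFun k x| * |hermiteFun l x| * (2 * R) := by
          gcongr; exact hU x
      _ ≤ C * ((1 + |x|) ^ (2 * δ) * hermiteFun k x ^ 2 + R ^ 2 * hermiteFun l x ^ 2) := by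
        nlinarith [mul_le_mul_of_nonneg_left h hC]
  have hweight : Continuous fun x : ℝ => (1 + |x|) ^ (2 * δ) :=
    (continuous_const.add continuous_abs).rpow_const fun _ => Or.inr (by positivity)
  have hk := integrable_mul_hermiteFun_sq hweight
    (fun x => by rw [abs_of_nonneg (by positivity)]; exact one_add_abs_rpow_le (by linarith) x) k
  have hint := (hk.add ((integrable_hermiteFun_sq l).const_mul (R ^ 2))).const_mul (C / (2 * R))
  calc |∫ x, U x * hermiteFun k x * hermiteFun l x|
      ≤ ∫ x, C / (2 * R)
          * ((1 + |x|) ^ (2 * δ) * hermiteFun k x ^ 2 + R ^ 2 * hermiteFun l x ^ 2) :=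
        (norm_integral_le_integral_norm _).trans
          (integral_mono_of_nonneg (ae_of_all _ fun x => norm_nonneg _) hint (ae_of_all _ hpt))
    _ ≤ C / (2 * R) * (4 * R ^ 2 + R ^ 2 * 1) := by
        rw [integral_const_mul, integral_add hk ((integrable_hermiteFun_sq l).const_mul _),
          integral_const_mul]
        gcongr
        · exact (integral_weight_mul_hermiteFun_sq_le hδ₀ hδ₁ k).trans
            (by rw [hR2]; gcongr; linarith)
        · exact integral_hermiteFun_sq_le_one l
    _ = 5 / 2 * C * R := by field_simp; ring

theorem two_mul_sub_mul_integral_hermiteFun_succ {V V' : ℝ → ℝ} {A : ℝ}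
    (hV : ∀ x, HasDerivAt V (V' x) x) (hV' : Continuous V') (hVA : ∀ x, |V x| ≤ A * (1 + x ^ 2))
    (hV'A : ∀ x, |V' x| ≤ A * (1 + x ^ 2)) (m n : ℕ) :
    2 * ((m : ℝ) - n) * ∫ x, V x * hermiteFun (m + 1) x * hermiteFun (n + 1) x
      = √((m : ℝ) / 2) * (∫ x, V' x * hermiteFun m x * hermiteFun (n + 1) x)
        - √(((m : ℝ) + 1) / 2) * (∫ x, V' x * hermiteFun (m + 2) x * hermiteFun (n + 1) x)
        - √((n : ℝ) / 2) * (∫ x, V' x * hermiteFun (m + 1) x * hermiteFun n x)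
        + √(((n : ℝ) + 1) / 2) * ∫ x, V' x * hermiteFun (m + 1) x * hermiteFun (n + 2) x := by
  have hI (k l : ℕ) : Integrable fun x => V' x * hermiteFun k x * hermiteFun l x :=
    (hasGaussianDecay_hermiteFun k).integrable_mul_mul hV' hV'A (hasGaussianDecay_hermiteFun l)
  have h := integral_commutator_hermiteFun hV hV' hVA hV'A (m + 1) (n + 1)
  rw [deriv_hermiteFun_succ, deriv_hermiteFun_succ] at h
  push_cast at h
  rw [show (m : ℝ) - n = m + 1 - (n + 1) by ring, h, ← integral_const_mul, ← integral_const_mul,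
    ← integral_const_mul, ← integral_const_mul, ← integral_sub, ← integral_sub, ← integral_add]
  · exact integral_congr_ae (ae_of_all _ fun x => by ring)
  all_goals fun_prop

theorem abs_integral_mul_hermiteFun_mul_le_of_le {δ C : ℝ} (hδ₀ : 0 ≤ δ) (hδ₁ : δ ≤ 1)
    (hC : 0 ≤ C) {U : ℝ → ℝ} (hU : ∀ x, |U x| ≤ C * (1 + |x|) ^ δ) {k m : ℕ} (hk : k ≤ m + 2)
    (l : ℕ) :
    |∫ x, U x * hermiteFun k x * hermiteFun l x| ≤ 15 / 2 * C * ((m : ℝ) + 1) ^ (δ / 2) := by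
  have h3 : (3 : ℝ) ^ (δ / 2) ≤ 3 := by
    simpa using rpow_le_rpow_of_exponent_le (by norm_num : (1 : ℝ) ≤ 3) (by linarith : δ / 2 ≤ 1)
  calc |∫ x, U x * hermiteFun k x * hermiteFun l x|
      ≤ 5 / 2 * C * ((k : ℝ) + 1) ^ (δ / 2) := abs_integral_mul_hermiteFun_mul_le hδ₀ hδ₁ hC hU k l
    _ ≤ 5 / 2 * C * (3 ^ (δ / 2) * ((m : ℝ) + 1) ^ (δ / 2)) := by
        rw [← mul_rpow (by norm_num) (by positivity)]
        gcongr
        have : (k : ℝ) ≤ m + 2 := by exact_mod_cast hk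
        linarith
    _ ≤ 5 / 2 * C * (3 * ((m : ℝ) + 1) ^ (δ / 2)) := by gcongr
    _ = 15 / 2 * C * ((m : ℝ) + 1) ^ (δ / 2) := by ring

theorem abs_sub_mul_abs_integral_mul_hermiteFun_mul_le {δ C : ℝ} (hδ₀ : 0 ≤ δ) (hδ₁ : δ ≤ 1)
    (hC : 0 ≤ C) {V : ℝ → ℝ} (hV : ContDiff ℝ 1 V) (hVb : ∀ x, |V x| ≤ C)
    (hV'b : ∀ x, |deriv V x| ≤ C * (1 + |x|) ^ δ) {i j : ℕ} (hi : 0 < i) (hij : i ≤ j) :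
    |(i : ℝ) - j| * |∫ x, V x * hermiteFun i x * hermiteFun j x|
      ≤ 15 * C * (j : ℝ) ^ ((1 : ℝ) / 2) * (i : ℝ) ^ (δ / 2) := by
  obtain ⟨m, rfl⟩ : ∃ m, i = m + 1 := ⟨i - 1, by omega⟩
  obtain ⟨n, rfl⟩ : ∃ n, j = n + 1 := ⟨j - 1, by omega⟩
  have hexp := two_mul_sub_mul_integral_hermiteFun_succ (A := 2 * C)
    (fun x => (hV.differentiable one_ne_zero x).hasDerivAt) (hV.continuous_deriv le_rfl)
    (fun x => (hVb x).trans (by nlinarith [sq_nonneg x]))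
    (fun x => (hV'b x).trans (by nlinarith [one_add_abs_rpow_le (by linarith : δ ≤ 2) x])) m n
  set T := 15 / 2 * C * ((m : ℝ) + 1) ^ (δ / 2)
  have hterm {k : ℕ} (hk : k ≤ m + 2) (l : ℕ) {t : ℝ} (ht₀ : 0 ≤ t) (ht : t ≤ n + 1) :
      |√(t / 2) * ∫ x, deriv V x * hermiteFun k x * hermiteFun l x| ≤ √((n : ℝ) + 1) * T := by
    rw [abs_mul, abs_of_nonneg (sqrt_nonneg _)]
    exact mul_le_mul (sqrt_le_sqrt (by linarith))
      (abs_integral_mul_hermiteFun_mul_le_of_le hδ₀ hδ₁ hC hV'b hk l) (abs_nonneg _) (sqrt_nonneg _)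
  have hmn : (m : ℝ) ≤ n := by exact_mod_cast (by omega : m ≤ n)
  have h₁ := hterm (k := m) (by omega) (n + 1) m.cast_nonneg (by linarith)
  have h₂ := hterm (k := m + 2) le_rfl (n + 1) (t := (m : ℝ) + 1) (by positivity) (by linarith)
  have h₃ := hterm (k := m + 1) (by omega) n n.cast_nonneg (by linarith)
  have h₄ := hterm (k := m + 1) (by omega) (n + 2) (t := (n : ℝ) + 1) (by positivity) le_rfl
  have habs (a b c d : ℝ) : |a - b - c + d| ≤ |a| + |b| + |c| + |d| := by
    linarith [abs_add_le (a - b - c) d, abs_sub (a - b) c, abs_sub a b]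
  have key := hexp ▸ habs _ _ _ _
  rw [abs_mul, abs_mul, abs_two, show (m : ℝ) - n = (m + 1 : ℕ) - (n + 1 : ℕ) by push_cast; ring]
    at key
  rw [← sqrt_eq_rpow]
  push_cast at key ⊢
  calc |(m : ℝ) + 1 - (n + 1)| * |∫ x, V x * hermiteFun (m + 1) x * hermiteFun (n + 1) x|
      ≤ 2 * (√((n : ℝ) + 1) * T) := by linarith
    _ = 15 * C * √((n : ℝ) + 1) * ((m : ℝ) + 1) ^ (δ / 2) := by ring

/-- Off-diagonal decay of the potential matrix: if `V` is `C¹` with `|V| ≤ C` and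
`|V'(x)| ≤ C(1+|x|)^δ`, `δ ∈ (0,1)`, then the Hermite-basis matrix
`P_i^j = ∫ V h_i h_j dx` satisfies
`|i-j|·|P_i^j| ≤ C'·max(i,j)^{1/2}·min(i,j)^{δ/2}`. -/
theorem stmt16 (δ C : ℝ) (hδ : δ ∈ Set.Ioo (0:ℝ) 1) (hC : 0 < C)
    (V : ℝ → ℝ) (hV : ContDiff ℝ 1 V)
    (hVb : ∀ x, |V x| ≤ C) (hV'b : ∀ x, |deriv V x| ≤ C * (1+|x|) ^ δ) :
    ∃ C' : ℝ, 0 < C' ∧ ∀ i j : ℕ+,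
      |(i:ℝ) - (j:ℝ)| * |∫ x, V x * hermiteFun (i:ℕ) x * hermiteFun (j:ℕ) x|
        ≤ C' * ((max i j : ℕ+):ℝ) ^ ((1:ℝ)/2) * ((min i j : ℕ+):ℝ) ^ (δ/2) := by
  refine ⟨15 * C, by positivity, fun i j => ?_⟩
  rcases le_total i j with h | h
  · rw [max_eq_right h, min_eq_left h]
    exact abs_sub_mul_abs_integral_mul_hermiteFun_mul_le hδ.1.le hδ.2.le hC.le hV hVb hV'b i.pos h
  · rw [max_eq_left h, min_eq_right h, abs_sub_comm,
      integral_congr_ae (ae_of_all _ fun x => mul_right_comm (V x) _ _)]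
    exact abs_sub_mul_abs_integral_mul_hermiteFun_mul_le hδ.1.le hδ.2.le hC.le hV hVb hV'b j.pos h
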